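/- A comparability graph is permutationally k-representable if and only if the partial order induced by some transitive orientation of it has order dimension at most k. -/

import Mathlib

/-- Letters `x` and `y` alternate in the word `W`: the subword of `W` induced by
`{x, y}` contains neither `xx` nor `yy` as a factor. -/
def Alternates {V : Type*} [DecidableEq V] (W : List V) (x y : V) : Prop :=
  List.Chain' (· ≠ ·) (W.filter (fun z => z = x ∨ z = y))

/-- The word `W` (over alphabet `V`, every letter occurring) represents the graph `G`:
distinct vertices alternate in `W` iff they are adjacent in `G`. -/
def Represents {V : Type*} [DecidableEq V] (W : List V) (G : SimpleGraph V) : Prop :=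
  (∀ v : V, v ∈ W) ∧ ∀ x y : V, x ≠ y → (G.Adj x y ↔ Alternates W x y)

/-- A word is `k`-uniform if every letter of the alphabet occurs exactly `k` times. -/
def IsKUniform {V : Type*} [DecidableEq V] (W : List V) (k : ℕ) : Prop :=
  ∀ v : V, W.count v = k
/-- `P` is a permutation word: every letter of the alphabet occurs exactly once. -/
def IsPermutationWord {V : Type*} [DecidableEq V] (P : List V) : Prop :=
  ∀ v : V, P.count v = 1

/-- A graph is permutationally representable if a concatenation of (at least one)
permutations of its vertex set represents it. -/
def PermutationallyRepresentable {V : Type*} [DecidableEq V] (G : SimpleGraph V) : Prop :=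
  ∃ Ps : List (List V), Ps ≠ [] ∧ (∀ P ∈ Ps, IsPermutationWord P) ∧ Represents Ps.flatten G

/-- A graph is permutationally `k`-representable if a concatenation of `k` permutations
of its vertex set represents it. -/
def PermutationallyKRepresentable {V : Type*} [DecidableEq V] (G : SimpleGraph V) (k : ℕ) : Prop :=
  ∃ Ps : List (List V), Ps.length = k ∧ (∀ P ∈ Ps, IsPermutationWord P) ∧ Represents Ps.flatten G
/-- `D` is an orientation of the graph `G`: every arc lies on an edge, every edge is
oriented in exactly one direction. -/
structure IsOrientation {V : Type*} (G : SimpleGraph V) (D : V → V → Prop) : Prop where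
  adj_of_arc : ∀ u v, D u v → G.Adj u v
  arc_of_adj : ∀ u v, G.Adj u v → D u v ∨ D v u
  asymm : ∀ u v, D u v → ¬ D v u

/-- A digraph (relation) is acyclic: no directed cycle, i.e. the transitive closure
is irreflexive. -/
def DigraphAcyclic {V : Type*} (D : V → V → Prop) : Prop :=
  ∀ v : V, ¬ Relation.TransGen D v v

/-- The digraph `D` has a shortcut: distinct vertices `v 0, …, v t` (`t ≥ 3`) forming a
directed path, together with the arc `v 0 → v t`, such that some arc `v i → v j` with
`i < j` is missing. -/
def HasShortcut {V : Type*} (D : V → V → Prop) : Prop :=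
  ∃ (t : ℕ) (v : ℕ → V), 3 ≤ t ∧
    (∀ i j, i ≤ t → j ≤ t → i ≠ j → v i ≠ v j) ∧
    (∀ i, i < t → D (v i) (v (i + 1))) ∧
    D (v 0) (v t) ∧
    ∃ i j, i < j ∧ j ≤ t ∧ ¬ D (v i) (v j)

/-- A digraph is semi-transitive if it is acyclic and has no shortcut. -/
def SemiTransitive {V : Type*} (D : V → V → Prop) : Prop :=
  DigraphAcyclic D ∧ ¬ HasShortcut D
/-- `L` is a strict linear order on `V` (as a relation). -/
def IsStrictLinearOrder {V : Type*} (L : V → V → Prop) : Prop :=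
  (∀ u, ¬ L u u) ∧ (∀ u v w, L u v → L v w → L u w) ∧ (∀ u v, u ≠ v → L u v ∨ L v u)

/-- The strict partial order `D` has order dimension at most `k`: it is the
intersection of `k` strict linear orders. -/
def DimensionAtMost {V : Type*} (D : V → V → Prop) (k : ℕ) : Prop :=
  ∃ Ls : Fin k → (V → V → Prop), (∀ i, IsStrictLinearOrder (Ls i)) ∧
    ∀ u v, D u v ↔ ∀ i, Ls i u v

/-! The letters of a permutation word are linearly ordered by position, and two distinct letters
alternate in a concatenation of permutation words iff all of the words put them in the same
order. So a concatenation of `k` permutation words represents `G` exactly when the intersection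
of their `k` position orders orients `G`. Conversely, a linear order on `V` is the position
order of the enumeration of `V` sorted by it, so `k` linear orders whose intersection orients `G`
yield `k` permutation words representing `G`. -/

theorem List.isChain_ne_flatten_iff {α : Type*} {a b : α} (hab : a ≠ b) {Bs : List (List α)}
    (hBs : ∀ B ∈ Bs, B = [a, b] ∨ B = [b, a]) :
    IsChain (· ≠ ·) Bs.flatten ↔ (∀ B ∈ Bs, B = [a, b]) ∨ (∀ B ∈ Bs, B = [b, a]) := by
  induction Bs with
  | nil => simp
  | cons B Bs ih =>
    rw [forall_mem_cons] at hBs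
    rcases Bs with _ | ⟨C, Cs⟩
    · rcases hBs.1 with rfl | rfl <;> simp [hab, hab.symm]
    · rw [flatten_cons, isChain_append, ih hBs.2]
      rcases hBs.1 with rfl | rfl <;> rcases hBs.2 C mem_cons_self with rfl | rfl <;>
        simp [hab, hab.symm]

def Precedes {V : Type*} [DecidableEq V] (P : List V) (x y : V) : Prop :=
  P.idxOf x < P.idxOf y

section PermutationWord

variable {V : Type*} [DecidableEq V] {P : List V} {x y : V}

theorem IsPermutationWord.mem (hP : IsPermutationWord P) (v : V) : v ∈ P :=
  List.count_pos_iff.mp (by rw [hP v]; exact one_pos)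

theorem IsPermutationWord.nodup (hP : IsPermutationWord P) : P.Nodup :=
  List.nodup_iff_count_le_one.mpr fun v => (hP v).le

theorem IsPermutationWord.isStrictLinearOrder_precedes (hP : IsPermutationWord P) :
    IsStrictLinearOrder (Precedes P) :=
  ⟨fun _ => lt_irrefl _, fun _ _ _ => lt_trans, fun u _ huv =>
    Nat.lt_or_gt_of_ne (mt (List.idxOf_inj (hP.mem u)).mp huv)⟩

theorem IsPermutationWord.pairwise_precedes (hP : IsPermutationWord P) :
    P.Pairwise (Precedes P) :=
  List.pairwise_iff_getElem.mpr fun i j hi hj hij => by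
    simpa only [Precedes, hP.nodup.idxOf_getElem] using hij

theorem IsPermutationWord.filter_eq_pair_iff (hP : IsPermutationWord P) (hxy : x ≠ y) :
    P.filter (fun z => z = x ∨ z = y) = [x, y] ↔ Precedes P x y := by
  have hfilter := hP.pairwise_precedes.filter (fun z => decide (z = x ∨ z = y))
  refine ⟨fun h => List.rel_of_pairwise_cons (h ▸ hfilter) (List.mem_singleton_self y),
    fun h => ?_⟩
  refine List.Perm.eq_of_pairwise (fun a b _ _ hab hba => (lt_asymm hab hba).elim) hfilter
    (List.pairwise_pair.mpr h) ?_
  rw [List.perm_ext_iff_of_nodup (hP.nodup.filter _) (by simpa using hxy)]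
  simp [hP.mem]

theorem IsPermutationWord.filter_eq_pair_swap_iff (hP : IsPermutationWord P) (hxy : x ≠ y) :
    P.filter (fun z => z = x ∨ z = y) = [y, x] ↔ Precedes P y x := by
  rw [← hP.filter_eq_pair_iff hxy.symm]
  simp only [or_comm]

theorem IsPermutationWord.filter_eq_pair_or (hP : IsPermutationWord P) (hxy : x ≠ y) :
    P.filter (fun z => z = x ∨ z = y) = [x, y] ∨ P.filter (fun z => z = x ∨ z = y) = [y, x] := by
  rw [hP.filter_eq_pair_iff hxy, hP.filter_eq_pair_swap_iff hxy]
  exact hP.isStrictLinearOrder_precedes.2.2 x y hxy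

theorem IsPermutationWord.precedes_iff_of_pairwise {L : V → V → Prop} (hP : IsPermutationWord P)
    (hL : IsStrictLinearOrder L) (hPL : P.Pairwise L) : Precedes P x y ↔ L x y := by
  have hprec : ∀ {u v}, Precedes P u v → L u v := fun {u v} h => by
    simpa only [List.getElem_idxOf] using
      List.pairwise_iff_getElem.mp hPL _ _ (List.idxOf_lt_length_of_mem (hP.mem u))
        (List.idxOf_lt_length_of_mem (hP.mem v)) h
  refine ⟨hprec, fun h => ?_⟩
  obtain ⟨hirrefl, htrans, -⟩ := hL
  rcases hP.isStrictLinearOrder_precedes.2.2 x y (fun hxy => hirrefl x (hxy ▸ h)) with h' | h'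
  · exact h'
  · exact (hirrefl x (htrans x y x h (hprec h'))).elim

end PermutationWord

theorem isOrientation_iff_of_transitive {V : Type*} {G : SimpleGraph V} {D : V → V → Prop}
    (htrans : ∀ u v w, D u v → D v w → D u w) :
    IsOrientation G D ↔ (∀ v, ¬ D v v) ∧ ∀ x y, x ≠ y → (G.Adj x y ↔ D x y ∨ D y x) := by
  refine ⟨fun hD => ⟨fun v h => hD.asymm v v h h, fun x y _ => ⟨hD.arc_of_adj x y, ?_⟩⟩,
    fun ⟨hirrefl, hadj⟩ => ⟨?_, ?_, ?_⟩⟩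
  · rintro (h | h)
    exacts [hD.adj_of_arc x y h, (hD.adj_of_arc y x h).symm]
  · exact fun u v h => (hadj u v fun huv => hirrefl u (huv ▸ h)).mpr (Or.inl h)
  · exact fun u v h => (hadj u v h.ne).mp h
  · exact fun u v huv hvu => hirrefl u (htrans u v u huv hvu)

section Representation

variable {V : Type*} [DecidableEq V] {k : ℕ} {P : Fin k → List V}

theorem alternates_flatten_ofFn_iff (hP : ∀ i, IsPermutationWord (P i)) {x y : V} (hxy : x ≠ y) :
    Alternates (List.ofFn P).flatten x y ↔
      (∀ i, Precedes (P i) x y) ∨ ∀ i, Precedes (P i) y x := by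
  rw [Alternates, List.Chain', List.filter_flatten, List.isChain_ne_flatten_iff hxy, List.map_ofFn,
    List.forall_mem_ofFn_iff, List.forall_mem_ofFn_iff]
  · simp only [Function.comp_apply, (hP _).filter_eq_pair_iff hxy,
      (hP _).filter_eq_pair_swap_iff hxy]
  · simpa only [List.map_ofFn, List.forall_mem_ofFn_iff, Function.comp_apply] using
      fun i => (hP i).filter_eq_pair_or hxy

theorem represents_flatten_ofFn_iff_isOrientation (hP : ∀ i, IsPermutationWord (P i))
    {G : SimpleGraph V} :
    Represents (List.ofFn P).flatten G ↔ IsOrientation G (fun u v => ∀ i, Precedes (P i) u v) := by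
  rw [isOrientation_iff_of_transitive fun u v w huv hvw i => lt_trans (huv i) (hvw i)]
  refine and_congr (forall_congr' fun v => ?_) (forall₂_congr fun x y => forall_congr' fun hxy =>
    by rw [alternates_flatten_ofFn_iff hP hxy])
  simp [List.mem_ofFn, Precedes, (hP _).mem]

theorem permutationallyKRepresentable_iff_exists_ofFn {G : SimpleGraph V} :
    PermutationallyKRepresentable G k ↔
      ∃ P : Fin k → List V, (∀ i, IsPermutationWord (P i)) ∧ Represents (List.ofFn P).flatten G := by
  constructor
  · rintro ⟨Ps, rfl, hPs, hrep⟩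
    exact ⟨Ps.get, fun i => hPs _ (List.get_mem Ps i), by rwa [List.ofFn_get]⟩
  · rintro ⟨P, hP, hrep⟩
    exact ⟨List.ofFn P, List.length_ofFn, List.forall_mem_ofFn_iff.mpr hP, hrep⟩

end Representation

theorem IsStrictLinearOrder.exists_isPermutationWord_pairwise {V : Type*} [Fintype V]
    [DecidableEq V] {L : V → V → Prop} (hL : IsStrictLinearOrder L) :
    ∃ P : List V, IsPermutationWord P ∧ P.Pairwise L := by
  classical
  obtain ⟨hirrefl, htrans, htotal⟩ := hL
  have : IsStrictTotalOrder V L :=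
    { irrefl := hirrefl, trans := htrans
      trichotomous := fun u v huv hvu => by_contra fun h => (htotal u v h).elim huv hvu }
  let := linearOrderOfSTO L
  exact ⟨Finset.univ.sort, fun v => List.count_eq_one_of_mem (Finset.sort_nodup _ _) (by simp),
    (Finset.sortedLT_sort _).pairwise⟩

theorem stmt10_general {V : Type*} [Fintype V] [DecidableEq V] (G : SimpleGraph V) (k : ℕ) :
    PermutationallyKRepresentable G k ↔
      ∃ D : V → V → Prop, IsOrientation G D ∧ (∀ u v w, D u v → D v w → D u w) ∧
        DimensionAtMost D k := by
  rw [permutationallyKRepresentable_iff_exists_ofFn]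
  constructor
  · rintro ⟨P, hP, hrep⟩
    exact ⟨_, (represents_flatten_ofFn_iff_isOrientation hP).mp hrep,
      fun u v w huv hvw i => lt_trans (huv i) (hvw i),
      fun i => Precedes (P i), fun i => (hP i).isStrictLinearOrder_precedes, fun _ _ => Iff.rfl⟩
  · rintro ⟨D, hD, -, L, hL, hDL⟩
    choose P hP hPL using fun i => (hL i).exists_isPermutationWord_pairwise
    have hD_eq : D = fun u v => ∀ i, Precedes (P i) u v := by
      ext u v
      simp only [hDL, (hP _).precedes_iff_of_pairwise (hL _) (hPL _)]
    exact ⟨P, hP, (represents_flatten_ofFn_iff_isOrientation hP).mpr (hD_eq ▸ hD)⟩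

/-- A comparability graph is permutationally `k`-representable iff the partial order
induced by some transitive orientation of it has order dimension at most `k`. -/
theorem stmt10 {V : Type*} [Fintype V] [DecidableEq V] (G : SimpleGraph V) (k : ℕ)
    (hcomp : ∃ D : V → V → Prop, IsOrientation G D ∧ (∀ u v w, D u v → D v w → D u w)) :
    PermutationallyKRepresentable G k ↔
      ∃ D : V → V → Prop, IsOrientation G D ∧ (∀ u v w, D u v → D v w → D u w) ∧
        DimensionAtMost D k :=
  stmt10_general G k
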